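/- Let Y and X be disjoint nonempty finite sets, and let S and S' be opposite paracells associated to X. Then Y↓S = {J ∈ P_*(Y∪X) : J∩X = X or J∩X ∈ S} and Y↑S' = {J ∈ P_*(Y∪X) : J∩X = ∅ or J∩X ∈ S'} are opposite paracells associated to Y∪X. Moreover, if S and S' are opposite precells (respectively cells), then Y↓S and Y↑S' are opposite precells (respectively cells). -/

import Mathlib

open scoped Classical

namespace GRF

variable {α : Type*} [DecidableEq α]

/-- `J` is a proper (nonempty, not everything) subset of `X`. -/
def IsProperSubset (X J : Finset α) : Prop := J ⊆ X ∧ J ≠ ∅ ∧ J ≠ X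

/-- A proper sequence in `P(X)`: a nonempty list of pairwise disjoint nonempty
subsets of `X` with union `X`. -/
def IsProperSeq (X : Finset α) (c : List (Finset α)) : Prop :=
  c ≠ [] ∧ (∀ J ∈ c, J ≠ ∅) ∧ List.Pairwise (fun I J => I ∩ J = ∅) c ∧
    c.foldr (· ∪ ·) ∅ = X

/-- The product of two sequences: all `A_i ∩ B_j`, ordered first by `j` then by `i`,
with empty intersections deleted. -/
noncomputable def seqMul (a b : List (Finset α)) : List (Finset α) :=
  ((b.map fun B => a.map fun A => A ∩ B).flatten).filter fun J => J ≠ ∅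

/-- The set `S' = {J ⊆ X : X \ J ∈ S}` opposite to `S`. -/
def opp (X : Finset α) (S : Set (Finset α)) : Set (Finset α) :=
  {J | J ⊆ X ∧ X \ J ∈ S}

/-- A paracell associated to `X`. -/
def IsParacell (X : Finset α) (S : Set (Finset α)) : Prop :=
  S.Nonempty ∧ (∀ J ∈ S, IsProperSubset X J) ∧
    ∀ I ∈ S, ∀ J ∈ S, I ∩ J ∈ S ∨ I ∪ J ∈ S

/-- A precell associated to `X`. -/
def IsPrecell (X : Finset α) (S : Set (Finset α)) : Prop :=
  IsParacell X S ∧ ∀ J : Finset α, IsProperSubset X J → J ∈ S ∨ X \ J ∈ S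

/-- A cell associated to `X`: a precell admitting real weights with zero total sum,
positive on all members of the cell. -/
def IsCell (X : Finset α) (S : Set (Finset α)) : Prop :=
  IsPrecell X S ∧ ∃ s : α → ℝ,
    (∑ j ∈ X, s j) = 0 ∧ ∀ J ∈ S, 0 < ∑ j ∈ J, s j

/-- `Y ↓ S` for `S` a paracell associated to `X`. -/
def cellDown (Y X : Finset α) (S : Set (Finset α)) : Set (Finset α) :=
  {J | IsProperSubset (Y ∪ X) J ∧ (J ∩ X = X ∨ J ∩ X ∈ S)}

/-- `Y ↑ S'` for `S'` a paracell associated to `X`. -/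
def cellUp (Y X : Finset α) (S : Set (Finset α)) : Set (Finset α) :=
  {J | IsProperSubset (Y ∪ X) J ∧ (J ∩ X = ∅ ∨ J ∩ X ∈ S)}

/-- `Y ↓ j` for a single index `j`. -/
def ptDown (Y : Finset α) (j : α) : Set (Finset α) :=
  {J | IsProperSubset (insert j Y) J ∧ j ∈ J}

/-- `Y ↑ j` for a single index `j`. -/
def ptUp (Y : Finset α) (j : α) : Set (Finset α) :=
  {J | IsProperSubset (insert j Y) J ∧ j ∉ J}

/-- The underlying vector space of the algebra `A(X)`: formal complex linear
combinations of sequences of subsets. -/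
abbrev AX (α : Type*) [DecidableEq α] : Type _ := (List (Finset α)) →₀ ℂ

/-- The multiplication of `A(X)`, extending `seqMul` bilinearly. -/
noncomputable def amul (x y : AX α) : AX α :=
  x.sum fun a ca => y.sum fun b cb => Finsupp.single (seqMul a b) (ca * cb)

/-- The unit `{X}` of `A(X)`. -/
noncomputable def oneA (X : Finset α) : AX α := Finsupp.single [X] 1

/-- `Î = {I, X \ I}` as an element of `A(X)`. -/
noncomputable def hatI (X I : Finset α) : AX α := Finsupp.single [I, X \ I] 1

/-- Product of a list of elements of `A(X)` (with unit `{X}`). -/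
noncomputable def aprod (X : Finset α) (l : List (AX α)) : AX α :=
  l.foldr amul (oneA X)

/-- A `ν`-chain associated to `S'`: a proper sequence all of whose proper initial
partial unions lie in `S'`. -/
def IsChainFor (X : Finset α) (S' : Set (Finset α)) (c : List (Finset α)) : Prop :=
  IsProperSeq X c ∧
    ∀ r : ℕ, 0 < r → r < c.length → ((c.take r).foldr (· ∪ ·) ∅) ∈ S'

lemma IsProperSeq.nodup {X : Finset α} {c : List (Finset α)}
    (h : IsProperSeq X c) : c.Nodup := by
  obtain ⟨-, hne, hpw, -⟩ := h
  refine List.Pairwise.imp_of_mem ?_ hpw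
  intro a b ha _ hab
  intro h'
  subst h'
  exact hne a ha (by simpa using hab)

/-- `U_S = Σ_ν Σ_{ν-chains for S'} (−1)^{ν−1} {J_1,…,J_ν}`, as a function of the
opposite paracell `S'`. -/
noncomputable def US [Fintype α] (X : Finset α) (S' : Set (Finset α)) : AX α :=
  Finsupp.ofSupportFinite
    (fun c => if IsChainFor X S' c then (-1 : ℂ) ^ (c.length - 1) else 0)
    (Set.Finite.subset
      (List.finite_length_le (Finset α) (Fintype.card (Finset α)))
      (by
        intro c hc
        have h : IsChainFor X S' c := by
          by_contra h
          simp [Function.mem_support, h] at hc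
        exact h.1.nodup.length_le_card))

/-- The underlying vector space of `A(A∪{1}) ⊗ A(B∪{1})`. -/
abbrev AX2 (α : Type*) [DecidableEq α] : Type _ :=
  (List (Finset α) × List (Finset α)) →₀ ℂ

/-- The multiplication of the tensor product algebra. -/
noncomputable def tmul (x y : AX2 α) : AX2 α :=
  x.sum fun a ca => y.sum fun b cb =>
    Finsupp.single (seqMul a.1 b.1, seqMul a.2 b.2) (ca * cb)

/-- The tensor `u ⊗ v` of two elements of `A(A∪{1})` and `A(B∪{1})`. -/
noncomputable def tens (u v : AX α) : AX2 α :=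
  u.sum fun a ca => v.sum fun b cb => Finsupp.single (a, b) (ca * cb)

/-- The pair `(c_A, c_B)` of traces of a sequence `c` on `A∪{1}` and `B∪{1}`,
with empty sets deleted. -/
noncomputable def facSeq (A1 B1 : Finset α) (c : List (Finset α)) :
    List (Finset α) × List (Finset α) :=
  ((c.map fun J => J ∩ A1).filter fun J => J ≠ ∅,
   (c.map fun J => J ∩ B1).filter fun J => J ≠ ∅)

/-- The factorization map `Fac : A(X) → A(A∪{1}) ⊗ A(B∪{1})`. -/
noncomputable def Fac (A1 B1 : Finset α) (x : AX α) : AX2 α :=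
  x.sum fun c cc => Finsupp.single (facSeq A1 B1 c) cc

/-- The paracell `(S‖1,A)` built from opposite paracells `S`, `S'` relative to
`X = A ∪ B ∪ {o}`. -/
def restCell (A : Finset α) (o : α) (S S' : Set (Finset α)) : Set (Finset α) :=
  {J | IsProperSubset (insert o A) J ∧
    ((J ⊆ A ∧ J ∈ S) ∨ (o ∈ J ∧ A \ J ∈ S'))}

/-! Restricting to `X` identifies `Y↓S` with the sets whose trace on `X` lies in `S ∪ {X}`,
and `S ∪ {X}` is again closed under "intersection or union"; complementation in `Y ∪ X`
commutes with taking traces on `X`. This gives the paracell, opposite and precell parts.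
For cells, if `m` is the least `s`-weight of a member of `S`, the weights `s / m + 1 / |X|`
on `X` and `-1 / |Y|` on `Y` sum to zero and are positive on `Y↓S`. -/

open Finset

namespace IsProperSubset

section

variable {β : Type*} {Z I J : Finset β}

lemma of_subset_of_ne_empty (h : IsProperSubset Z I) (hJI : J ⊆ I) (hJ : J ≠ ∅) :
    IsProperSubset Z J :=
  ⟨hJI.trans h.1, hJ, fun hJZ => h.2.2 (h.1.antisymm (hJZ ▸ hJI))⟩

lemma mono (h : IsProperSubset Z J) {W : Finset β} (hZW : Z ⊆ W) : IsProperSubset W J :=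
  ⟨h.1.trans hZW, h.2.1, fun hJW => h.2.2 (h.1.antisymm (hJW ▸ hZW))⟩

end

variable {Z J : Finset α}

lemma sdiff (h : IsProperSubset Z J) : IsProperSubset Z (Z \ J) := by
  obtain ⟨hJZ, hJ, hJne⟩ := h
  refine ⟨sdiff_subset, ?_, ?_⟩
  · rw [Ne, sdiff_eq_empty_iff_subset]
    exact fun hZJ => hJne (hJZ.antisymm hZJ)
  · rw [Ne, Finset.sdiff_eq_self_iff_disjoint]
    exact fun hd => hJ ((disjoint_self_iff_empty J).mp (hd.mono_left hJZ).symm)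

lemma of_sdiff (hJZ : J ⊆ Z) (h : IsProperSubset Z (Z \ J)) : IsProperSubset Z J := by
  simpa only [Finset.sdiff_sdiff_eq_self hJZ] using h.sdiff

end IsProperSubset

lemma union_sdiff_inter_right (Y X J : Finset α) : (Y ∪ X) \ J ∩ X = X \ (J ∩ X) := by
  ext x
  simp only [mem_inter, mem_sdiff, mem_union]
  tauto

section Opposite

variable {Z : Finset α} {T : Set (Finset α)}

lemma IsParacell.opp (h : IsParacell Z T) : IsParacell Z (opp Z T) := by
  obtain ⟨⟨J₀, hJ₀⟩, hprop, hclose⟩ := h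
  refine ⟨⟨Z \ J₀, sdiff_subset, ?_⟩, fun J hJ => .of_sdiff hJ.1 (hprop _ hJ.2), ?_⟩
  · rwa [Finset.sdiff_sdiff_eq_self (hprop J₀ hJ₀).1]
  · rintro I ⟨hIZ, hIT⟩ J ⟨hJZ, hJT⟩
    rcases hclose _ hIT _ hJT with h | h
    · right
      exact ⟨union_subset hIZ hJZ, by rwa [sdiff_union_distrib]⟩
    · left
      exact ⟨inter_subset_left.trans hIZ, by rwa [sdiff_inter_distrib_right]⟩

lemma IsPrecell.opp (h : IsPrecell Z T) : IsPrecell Z (opp Z T) := by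
  refine ⟨h.1.opp, fun J hJ => ?_⟩
  rcases h.2 (Z \ J) hJ.sdiff with h' | h'
  · exact .inl ⟨hJ.1, h'⟩
  · exact .inr ⟨sdiff_subset, by rwa [Finset.sdiff_sdiff_eq_self hJ.1] at h' ⊢⟩

lemma IsCell.opp (h : IsCell Z T) : IsCell Z (opp Z T) := by
  obtain ⟨hpre, s, hsum, hpos⟩ := h
  refine ⟨hpre.opp, fun j => -s j, by simp [hsum], ?_⟩
  rintro J ⟨hJZ, hJT⟩
  have h := hpos _ hJT
  rw [sum_sdiff_eq_sub hJZ, hsum] at h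
  simp only [sum_neg_distrib]
  linarith

end Opposite

lemma cellUp_opp (Y X : Finset α) (S : Set (Finset α)) :
    cellUp Y X (opp X S) = opp (Y ∪ X) (cellDown Y X S) := by
  ext J
  simp only [cellUp, cellDown, opp, Set.mem_ofPred_eq, union_sdiff_inter_right,
    Finset.sdiff_eq_self_iff_disjoint, disjoint_iff_inter_eq_empty, inter_comm X,
    inter_assoc, inter_self, inter_subset_right, true_and]
  constructor
  · rintro ⟨hJ, h⟩
    exact ⟨hJ.1, hJ.sdiff, h⟩
  · rintro ⟨hJZ, hJ, h⟩
    exact ⟨.of_sdiff hJZ hJ, h⟩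

section Down

variable {X : Finset α} {S : Set (Finset α)}

lemma IsParacell.finite (hS : IsParacell X S) : S.Finite :=
  X.powerset.finite_toSet.subset fun J hJ => mem_powerset.mpr (hS.2.1 J hJ).1

lemma IsParacell.ne_empty_of_mem_insert (hS : IsParacell X S) {A : Finset α}
    (hA : A ∈ insert X S) : A ≠ ∅ := by
  obtain ⟨⟨J₀, hJ₀⟩, hprop, -⟩ := hS
  rcases hA with rfl | hA
  · exact fun hX => (hprop J₀ hJ₀).2.1 (subset_empty.mp (hX ▸ (hprop J₀ hJ₀).1))
  · exact (hprop A hA).2.1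

lemma IsParacell.subset_of_mem_insert (hS : IsParacell X S) {A : Finset α}
    (hA : A ∈ insert X S) : A ⊆ X := by
  rcases hA with rfl | hA
  · exact subset_rfl
  · exact (hS.2.1 A hA).1

lemma IsParacell.inter_mem_insert_or_union_mem (hS : IsParacell X S) {A B : Finset α}
    (hA : A ∈ insert X S) (hB : B ∈ insert X S) : A ∩ B ∈ insert X S ∨ A ∪ B ∈ S := by
  rcases hA with rfl | hA
  · rw [inter_eq_right.mpr (hS.subset_of_mem_insert hB)]
    exact .inl hB
  rcases hB with rfl | hB
  · rw [inter_eq_left.mpr (hS.2.1 A hA).1]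
    exact .inl (.inr hA)
  exact (hS.2.2 A hA B hB).imp .inr id

lemma IsParacell.cellDown (Y : Finset α) (hS : IsParacell X S) :
    IsParacell (Y ∪ X) (cellDown Y X S) := by
  obtain ⟨J₀, hJ₀⟩ := hS.1
  refine ⟨⟨J₀, (hS.2.1 J₀ hJ₀).mono subset_union_right, .inr ?_⟩, fun J hJ => hJ.1, ?_⟩
  · rwa [inter_eq_left.mpr (hS.2.1 J₀ hJ₀).1]
  rintro I ⟨hI, hIX⟩ J ⟨hJ, hJX⟩
  rcases hS.inter_mem_insert_or_union_mem hIX hJX with h | h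
  · rw [← inter_inter_distrib_right] at h
    refine .inl ⟨hI.of_subset_of_ne_empty inter_subset_left fun h₀ => ?_, h⟩
    exact hS.ne_empty_of_mem_insert h (by rw [h₀, empty_inter])
  · rw [← union_inter_distrib_right] at h
    refine .inr ⟨⟨union_subset hI.1 hJ.1, fun h₀ => hI.2.1 (union_eq_empty.mp h₀).1,
      fun h₀ => (hS.2.1 _ h).2.2 ?_⟩, .inr h⟩
    rw [h₀, union_inter_cancel_right]

lemma IsPrecell.mem_insert_or_sdiff_mem_insert (hS : IsPrecell X S) {A : Finset α}
    (hA : A ⊆ X) : A ∈ insert X S ∨ X \ A ∈ insert X S := by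
  by_cases hAX : A = X
  · exact .inl (.inl hAX)
  by_cases hA₀ : A = ∅
  · exact .inr (.inl (by rw [hA₀, sdiff_empty]))
  exact (hS.2 A ⟨hA, hA₀, hAX⟩).imp .inr .inr

lemma IsPrecell.cellDown (Y : Finset α) (hS : IsPrecell X S) :
    IsPrecell (Y ∪ X) (cellDown Y X S) := by
  refine ⟨hS.1.cellDown Y, fun J hJ => ?_⟩
  rcases hS.mem_insert_or_sdiff_mem_insert (A := J ∩ X) inter_subset_right with h | h
  · exact .inl ⟨hJ, h⟩
  · exact .inr ⟨hJ.sdiff, by rwa [union_sdiff_inter_right]⟩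

noncomputable def downWeight (Y X : Finset α) (s : α → ℝ) (m : ℝ) (j : α) : ℝ :=
  if j ∈ X then s j / m + 1 / #X else -1 / #Y

lemma sum_downWeight (Y X J : Finset α) (s : α → ℝ) (m : ℝ) :
    ∑ j ∈ J, downWeight Y X s m j =
      (∑ j ∈ J ∩ X, s j) / m + #(J ∩ X) / #X - #(J \ X) / #Y := by
  unfold downWeight
  rw [sum_ite, filter_mem_eq_inter, filter_notMem_eq_sdiff,
    sum_add_distrib, ← sum_div, sum_const, sum_const,
    nsmul_eq_mul, nsmul_eq_mul]
  ring

lemma IsParacell.exists_pos_le_sum (hS : IsParacell X S) {s : α → ℝ}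
    (hs : ∀ J ∈ S, 0 < ∑ j ∈ J, s j) : ∃ m > 0, ∀ J ∈ S, m ≤ ∑ j ∈ J, s j := by
  obtain ⟨J₀, hJ₀, hmin⟩ := Set.exists_min_image S (fun J => ∑ j ∈ J, s j) hS.finite hS.1
  exact ⟨_, hs J₀ hJ₀, hmin⟩

lemma IsCell.cellDown {Y : Finset α} (hY : Y.Nonempty) (hd : Disjoint Y X) (hS : IsCell X S) :
    IsCell (Y ∪ X) (cellDown Y X S) := by
  obtain ⟨hP, s, hs₀, hs⟩ := hS
  obtain ⟨m, hm, hle⟩ := hP.1.exists_pos_le_sum hs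
  have hXc : (0 : ℝ) < #X := by
    have hX : X ≠ ∅ := hP.1.ne_empty_of_mem_insert (Set.mem_insert X S)
    exact_mod_cast card_pos.mpr (nonempty_iff_ne_empty.mpr hX)
  have hYc : (0 : ℝ) < #Y := by exact_mod_cast card_pos.mpr hY
  refine ⟨hP.cellDown Y, downWeight Y X s m, ?_, ?_⟩
  · rw [sum_downWeight, union_inter_cancel_right, union_sdiff_right, sdiff_eq_self_of_disjoint hd,
      hs₀, zero_div, div_self hXc.ne', div_self hYc.ne', zero_add, sub_self]
  rintro J ⟨hJ, hJX | hJX⟩ <;> rw [sum_downWeight]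
  · have hJY : J \ X ⊂ Y := by
      refine Finset.ssubset_iff_subset_ne.mpr ⟨sdiff_le_iff'.mpr hJ.1, fun h => hJ.2.2 ?_⟩
      rw [← sdiff_union_inter J X, h, hJX]
    have hcard : (#(J \ X) : ℝ) < #Y := by exact_mod_cast card_lt_card hJY
    rw [hJX, hs₀, zero_div, div_self hXc.ne', zero_add, sub_pos, div_lt_one hYc]
    exact hcard
  · have hJXs : 1 ≤ (∑ j ∈ J ∩ X, s j) / m := (one_le_div hm).mpr (hle _ hJX)
    have hJXc : (0 : ℝ) < #(J ∩ X) := by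
      exact_mod_cast card_pos.mpr (nonempty_iff_ne_empty.mpr (hP.1.2.1 _ hJX).2.1)
    have hJY : (#(J \ X) : ℝ) ≤ #Y := by exact_mod_cast card_le_card (sdiff_le_iff'.mpr hJ.1)
    have hXpart := div_pos hJXc hXc
    have hYpart := (div_le_one hYc).mpr hJY
    linarith

end Down

theorem down_up_paracell_general {α : Type*} [DecidableEq α] (Y X : Finset α)
    (hY : Y.Nonempty) (hd : Disjoint Y X)
    (S : Set (Finset α)) (hS : IsParacell X S) :
    (IsParacell (Y ∪ X) (cellDown Y X S) ∧
      cellUp Y X (opp X S) = opp (Y ∪ X) (cellDown Y X S)) ∧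
    (IsPrecell X S →
      IsPrecell (Y ∪ X) (cellDown Y X S) ∧ IsPrecell (Y ∪ X) (cellUp Y X (opp X S))) ∧
    (IsCell X S →
      IsCell (Y ∪ X) (cellDown Y X S) ∧ IsCell (Y ∪ X) (cellUp Y X (opp X S))) := by
  rw [cellUp_opp]
  exact ⟨⟨hS.cellDown Y, rfl⟩, fun hP => ⟨hP.cellDown Y, (hP.cellDown Y).opp⟩,
    fun hC => ⟨hC.cellDown hY hd, (hC.cellDown hY hd).opp⟩⟩

/-- `Y↓S` and `Y↑S'` are opposite paracells associated to `Y ∪ X`; moreover they are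
precells (resp. cells) whenever `S` is. -/
theorem down_up_paracell {α : Type*} [DecidableEq α] (Y X : Finset α)
    (hY : Y.Nonempty) (hX : X.Nonempty) (hd : Disjoint Y X)
    (S : Set (Finset α)) (hS : IsParacell X S) :
    (IsParacell (Y ∪ X) (cellDown Y X S) ∧
      cellUp Y X (opp X S) = opp (Y ∪ X) (cellDown Y X S)) ∧
    (IsPrecell X S →
      IsPrecell (Y ∪ X) (cellDown Y X S) ∧ IsPrecell (Y ∪ X) (cellUp Y X (opp X S))) ∧
    (IsCell X S →
      IsCell (Y ∪ X) (cellDown Y X S) ∧ IsCell (Y ∪ X) (cellUp Y X (opp X S))) :=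
  down_up_paracell_general Y X hY hd S hS

end GRF
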